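/- Let H be an infinite-dimensional complex Hilbert space and let M = L(H) be the C*-algebra of all bounded linear operators on H. Then M is not Jordan weakly amenable: there exists a continuous Jordan derivation from M to M* which is not an inner Jordan derivation. -/

import Mathlib

/-!
STATEMENT 3: Let `H` be an infinite-dimensional complex Hilbert space and
`M = L(H) = H →L[ℂ] H` the C*-algebra of all bounded linear operators on `H`.
Then `M` is not Jordan weakly amenable: there exists a continuous Jordan derivation
from `M` to `M*` which is not an inner Jordan derivation.
-/

open scoped ComplexConjugate
open scoped ENNReal

noncomputable section

section Defs

variable {A : Type*} [NonUnitalNormedRing A] [NormedSpace ℂ A]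
  [IsScalarTower ℂ A A] [SMulCommClass ℂ A A]

/-- The Jordan product `a∘b = (ab+ba)/2`. -/
def jord (a b : A) : A := (2 : ℂ)⁻¹ • (a * b + b * a)

/-- `D : A → A*` (continuous linear) is a Jordan derivation `D(a∘b) = D(a)∘b + a∘D(b)`,
written out pointwise on `A*`, where `(φ∘a)(x) := φ(a∘x)`. -/
def IsJordanDer (D : A →L[ℂ] (A →L[ℂ] ℂ)) : Prop :=
  ∀ a b x : A, D (jord a b) x = D a (jord b x) + D b (jord a x)

/-- `D : A → A*` is an inner Jordan derivation: a finite sum of the maps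
`a ↦ (x₀∘a)∘b − (b∘a)∘x₀`, i.e. pointwise `a ↦ (y ↦ x₀(a∘(b∘y)) − x₀((b∘a)∘y))`. -/
def IsInnerJordanDer (D : A →L[ℂ] (A →L[ℂ] ℂ)) : Prop :=
  ∃ (n : ℕ) (x₀ : Fin n → (A →L[ℂ] ℂ)) (b : Fin n → A),
    ∀ a y : A, D a y
      = ∑ i, (x₀ i (jord a (jord (b i) y)) - x₀ i (jord (jord (b i) a) y))

end Defs

/-! ### Auxiliary algebraic identities for the Jordan product -/

section JordAux

variable {A : Type*} [NonUnitalNormedRing A] [NormedSpace ℂ A]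
  [IsScalarTower ℂ A A] [SMulCommClass ℂ A A]

lemma jord_der_aux (a b x : A) :
    jord a b * x - x * jord a b
      = (a * jord b x - jord b x * a) + (b * jord a x - jord a x * b) := by
  simp only [jord, smul_mul_assoc, mul_smul_comm, ← smul_sub, ← smul_add]
  congr 1
  noncomm_ring

lemma jord_inner_aux (c u v : A) :
    jord u (jord c v) - jord (jord c u) v
      = ((2 : ℂ)⁻¹ * (2 : ℂ)⁻¹) • ((u * v - v * u) * c - c * (u * v - v * u)) := by
  simp only [jord, smul_mul_assoc, mul_smul_comm, smul_add, smul_smul, ← smul_sub, ← smul_add]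
  congr 1
  noncomm_ring

end JordAux

/-! ### Composition operators on `ℓ²` and the identity as a sum of two commutators -/

section LpOps

variable {ι : Type*}

private lemma two_pos_toReal : (0 : ℝ) < (2 : ℝ≥0∞).toReal := by norm_num

private lemma memℓp_comp (g : ι → ι) (hg : Function.Injective g)
    (ξ : lp (fun _ : ι => ℂ) 2) : Memℓp (fun i => ξ (g i)) 2 :=
  memℓp_gen (((lp.memℓp ξ).summable two_pos_toReal).comp_injective hg)

private lemma norm_extend_eq (g : ι → ι) (hg : Function.Injective g)
    (ξ : ι → ℂ) (j : ι) :
    ‖Function.extend g ξ 0 j‖ ^ (2 : ℝ≥0∞).toReal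
      = Function.extend g (fun i => ‖ξ i‖ ^ (2 : ℝ≥0∞).toReal) 0 j := by
  rcases em (∃ i, g i = j) with ⟨i, rfl⟩ | hj
  · rw [hg.extend_apply, hg.extend_apply]
  · rw [Function.extend_apply' _ _ _ hj, Function.extend_apply' _ _ _ hj]
    simp only [Pi.zero_apply, norm_zero]
    rw [Real.zero_rpow (by norm_num)]

private lemma memℓp_extend (g : ι → ι) (hg : Function.Injective g)
    (ξ : lp (fun _ : ι => ℂ) 2) : Memℓp (Function.extend g (⇑ξ) 0) 2 := by
  apply memℓp_gen
  have : (fun j => ‖Function.extend g (⇑ξ) 0 j‖ ^ (2 : ℝ≥0∞).toReal)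
      = Function.extend g (fun i => ‖ξ i‖ ^ (2 : ℝ≥0∞).toReal) 0 :=
    funext (norm_extend_eq g hg ⇑ξ)
  rw [this, summable_extend_zero hg]
  exact (lp.memℓp ξ).summable two_pos_toReal

/-- `ξ ↦ ξ ∘ g` as a continuous linear map on `ℓ²(ι)`, for injective `g`. -/
def compCLM (g : ι → ι) (hg : Function.Injective g) :
    lp (fun _ : ι => ℂ) 2 →L[ℂ] lp (fun _ : ι => ℂ) 2 :=
  LinearMap.mkContinuous
    { toFun := fun ξ => ⟨fun i => ξ (g i), memℓp_comp g hg ξ⟩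
      map_add' := fun ξ η => rfl
      map_smul' := fun c ξ => rfl }
    1
    (by
      intro ξ
      rw [one_mul]
      apply lp.norm_le_of_tsum_le two_pos_toReal (norm_nonneg ξ)
      rw [lp.norm_rpow_eq_tsum two_pos_toReal ξ]
      exact Summable.tsum_le_tsum_of_inj g hg
        (fun c _ => Real.rpow_nonneg (norm_nonneg _) _) (fun i => le_rfl)
        (((lp.memℓp ξ).summable two_pos_toReal).comp_injective hg)
        ((lp.memℓp ξ).summable two_pos_toReal))

/-- push-forward (extension by zero) along an injection `g`, as a continuous
linear map on `ℓ²(ι)`. -/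
def extendCLM (g : ι → ι) (hg : Function.Injective g) :
    lp (fun _ : ι => ℂ) 2 →L[ℂ] lp (fun _ : ι => ℂ) 2 :=
  LinearMap.mkContinuous
    { toFun := fun ξ => ⟨Function.extend g (⇑ξ) 0, memℓp_extend g hg ξ⟩
      map_add' := fun ξ η => by
        apply lp.ext
        funext j
        rcases em (∃ i, g i = j) with ⟨i, rfl⟩ | hj
        · show Function.extend g (⇑(ξ + η)) 0 (g i)
            = Function.extend g (⇑ξ) 0 (g i) + Function.extend g (⇑η) 0 (g i)
          rw [hg.extend_apply, hg.extend_apply, hg.extend_apply]; rfl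
        · show Function.extend g (⇑(ξ + η)) 0 j
            = Function.extend g (⇑ξ) 0 j + Function.extend g (⇑η) 0 j
          rw [Function.extend_apply' _ _ _ hj, Function.extend_apply' _ _ _ hj,
            Function.extend_apply' _ _ _ hj]; simp
      map_smul' := fun c ξ => by
        apply lp.ext
        funext j
        rcases em (∃ i, g i = j) with ⟨i, rfl⟩ | hj
        · simp [hg.extend_apply]
        · simp [Function.extend_apply' _ _ _ hj] }
    1
    (by
      intro ξ
      rw [one_mul]
      apply lp.norm_le_of_tsum_le two_pos_toReal (norm_nonneg ξ)
      rw [lp.norm_rpow_eq_tsum two_pos_toReal ξ]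
      exact le_of_eq ((tsum_congr (norm_extend_eq g hg ⇑ξ)).trans
        (tsum_extend_zero hg _)))

lemma compCLM_apply (g : ι → ι) (hg : Function.Injective g)
    (ξ : lp (fun _ : ι => ℂ) 2) (i : ι) : compCLM g hg ξ i = ξ (g i) := rfl

lemma extendCLM_apply (g : ι → ι) (hg : Function.Injective g)
    (ξ : lp (fun _ : ι => ℂ) 2) (j : ι) :
    extendCLM g hg ξ j = Function.extend g (⇑ξ) 0 j := rfl

/-- On `ℓ²` of an infinite index type, the identity operator is a sum of two
commutators. -/
lemma exists_sum_two_commutators (ι : Type*) [Infinite ι] :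
    ∃ a b c d : lp (fun _ : ι => ℂ) 2 →L[ℂ] lp (fun _ : ι => ℂ) 2,
      a * b - b * a + (c * d - d * c) = 1 := by
  have hcard : Cardinal.mk (ι ⊕ ι) = Cardinal.mk ι := by
    simp [Cardinal.mk_sum, Cardinal.lift_id,
      Cardinal.add_eq_self (Cardinal.aleph0_le_mk ι)]
  obtain ⟨e⟩ := Cardinal.eq.mp hcard
  set g₁ : ι → ι := fun i => e (Sum.inl i) with hg₁def
  set g₂ : ι → ι := fun i => e (Sum.inr i) with hg₂def
  have hg₁ : Function.Injective g₁ := fun i j h => by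
    simpa using e.injective h
  have hg₂ : Function.Injective g₂ := fun i j h => by
    simpa using e.injective h
  refine ⟨compCLM g₁ hg₁, extendCLM g₁ hg₁, compCLM g₂ hg₂, extendCLM g₂ hg₂, ?_⟩
  have h1 : compCLM g₁ hg₁ * extendCLM g₁ hg₁ = 1 := by
    refine ContinuousLinearMap.ext fun ξ => lp.ext (funext fun i => ?_)
    show extendCLM g₁ hg₁ ξ (g₁ i) = ξ i
    rw [extendCLM_apply, hg₁.extend_apply]
  have h2 : compCLM g₂ hg₂ * extendCLM g₂ hg₂ = 1 := by
    refine ContinuousLinearMap.ext fun ξ => lp.ext (funext fun i => ?_)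
    show extendCLM g₂ hg₂ ξ (g₂ i) = ξ i
    rw [extendCLM_apply, hg₂.extend_apply]
  have h3 : extendCLM g₁ hg₁ * compCLM g₁ hg₁ + extendCLM g₂ hg₂ * compCLM g₂ hg₂ = 1 := by
    refine ContinuousLinearMap.ext fun ξ => lp.ext (funext fun j => ?_)
    show Function.extend g₁ (⇑(compCLM g₁ hg₁ ξ)) 0 j
        + Function.extend g₂ (⇑(compCLM g₂ hg₂ ξ)) 0 j = ξ j
    rcases hj : e.symm j with i | i
    · have hj1 : g₁ i = j := by rw [hg₁def]; simp [← hj]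
      have hj2 : ¬ ∃ i', g₂ i' = j := by
        rintro ⟨i', rfl⟩
        rw [hg₂def] at hj; simp at hj
      rw [← hj1, hg₁.extend_apply, hj1, Function.extend_apply' _ _ _ hj2]
      simp [← hj1, compCLM_apply]
    · have hj2 : g₂ i = j := by rw [hg₂def]; simp [← hj]
      have hj1 : ¬ ∃ i', g₁ i' = j := by
        rintro ⟨i', rfl⟩
        rw [hg₁def] at hj; simp at hj
      rw [Function.extend_apply' _ _ _ hj1, ← hj2, hg₂.extend_apply]
      simp [← hj2, compCLM_apply]
  have : compCLM g₁ hg₁ * extendCLM g₁ hg₁ - extendCLM g₁ hg₁ * compCLM g₁ hg₁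
      + (compCLM g₂ hg₂ * extendCLM g₂ hg₂ - extendCLM g₂ hg₂ * compCLM g₂ hg₂)
      = compCLM g₁ hg₁ * extendCLM g₁ hg₁ + compCLM g₂ hg₂ * extendCLM g₂ hg₂
        - (extendCLM g₁ hg₁ * compCLM g₁ hg₁ + extendCLM g₂ hg₂ * compCLM g₂ hg₂) := by
    abel
  rw [this, h1, h2, h3]
  exact add_sub_cancel_right 1 1

end LpOps

/-- In `B(H)` for infinite-dimensional Hilbert `H`, the identity is a sum of two
commutators. -/
lemma exists_sum_two_commutators_operators
    (H : Type*) [NormedAddCommGroup H] [InnerProductSpace ℂ H] [CompleteSpace H]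
    (hH : ¬ FiniteDimensional ℂ H) :
    ∃ a b c d : H →L[ℂ] H, a * b - b * a + (c * d - d * c) = 1 := by
  obtain ⟨w, bH, hb⟩ := exists_hilbertBasis ℂ H
  haveI : Infinite ↥w := by
    rw [Set.infinite_coe_iff]
    intro hfin
    apply hH
    haveI : FiniteDimensional ℂ (Submodule.span ℂ w) :=
      FiniteDimensional.span_of_finite ℂ hfin
    have hclosed : IsClosed ((Submodule.span ℂ w : Submodule ℂ H) : Set H) :=
      Submodule.closed_of_finiteDimensional _
    have hdense : (Submodule.span ℂ w).topologicalClosure = ⊤ := by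
      have := bH.dense_span
      rwa [hb, Subtype.range_coe] at this
    have htop : Submodule.span ℂ w = ⊤ := by
      rw [← hdense, hclosed.submodule_topologicalClosure_eq]
    exact FiniteDimensional.of_surjective (Submodule.span ℂ w).subtype
      (by rw [← LinearMap.range_eq_top, Submodule.range_subtype]; exact htop)
  obtain ⟨a, b, c, d, habcd⟩ := exists_sum_two_commutators ↥w
  let ce : H ≃L[ℂ] lp (fun _ : ↥w => ℂ) 2 := bH.repr.toContinuousLinearEquiv
  have hpt : ∀ ξ, a (b ξ) - b (a ξ) + (c (d ξ) - d (c ξ)) = ξ := by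
    intro ξ
    have := ContinuousLinearMap.ext_iff.mp habcd ξ
    simpa using this
  refine ⟨(ce.symm : _ →L[ℂ] _).comp (a.comp (ce : _ →L[ℂ] _)),
      (ce.symm : _ →L[ℂ] _).comp (b.comp (ce : _ →L[ℂ] _)),
      (ce.symm : _ →L[ℂ] _).comp (c.comp (ce : _ →L[ℂ] _)),
      (ce.symm : _ →L[ℂ] _).comp (d.comp (ce : _ →L[ℂ] _)), ?_⟩
  ext x
  simp only [ContinuousLinearMap.add_apply, ContinuousLinearMap.sub_apply,
    ContinuousLinearMap.mul_apply, ContinuousLinearMap.comp_apply,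
    ContinuousLinearEquiv.coe_coe, ContinuousLinearEquiv.apply_symm_apply,
    ContinuousLinearMap.one_apply]
  rw [← map_sub, ← map_sub, ← map_add, hpt, ContinuousLinearEquiv.symm_apply_apply]

/-- `L(H)` is not Jordan weakly amenable for infinite-dimensional `H`. -/
theorem bounded_operators_not_jordan_weakly_amenable
    (H : Type*) [NormedAddCommGroup H] [InnerProductSpace ℂ H] [CompleteSpace H]
    (hH : ¬ FiniteDimensional ℂ H) :
    ∃ D : (H →L[ℂ] H) →L[ℂ] ((H →L[ℂ] H) →L[ℂ] ℂ),
      IsJordanDer D ∧ ¬ IsInnerJordanDer D := by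
  haveI : Nontrivial H := by
    by_contra hnt
    rw [not_nontrivial_iff_subsingleton] at hnt
    exact hH (Module.Finite.of_surjective (0 : (Fin 0 → ℂ) →ₗ[ℂ] H)
      (fun x => ⟨0, Subsingleton.elim _ _⟩))
  set A := H →L[ℂ] H with hA
  have hone : (1 : A) ≠ 0 := by
    intro h
    obtain ⟨x, hx⟩ := exists_ne (0 : H)
    have := ContinuousLinearMap.ext_iff.mp h x
    simp at this
    exact hx this
  obtain ⟨x₀, hx₀norm, hx₀⟩ := exists_dual_vector ℂ (1 : A) (norm_ne_zero_iff.mpr hone)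
  have hx₀1 : x₀ 1 = 1 := by
    rw [hx₀, ContinuousLinearMap.one_def, ContinuousLinearMap.norm_id]
    norm_num
  set D : A →L[ℂ] (A →L[ℂ] ℂ) :=
    ((ContinuousLinearMap.compL ℂ A A ℂ) x₀).comp
      (ContinuousLinearMap.mul ℂ A - (ContinuousLinearMap.mul ℂ A).flip) with hDdef
  have hD : ∀ a y : A, D a y = x₀ (a * y - y * a) := by
    intro a y
    simp [hDdef, ContinuousLinearMap.compL_apply, ContinuousLinearMap.mul_apply']
  refine ⟨D, ?_, ?_⟩
  · intro a b x
    rw [hD, hD, hD, ← map_add, jord_der_aux]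
  · rintro ⟨n, x, bb, h⟩
    obtain ⟨a, b, c, d, habcd⟩ := exists_sum_two_commutators_operators H hH
    have key : ∀ u v : A, x₀ (u * v - v * u)
        = ∑ i, ((2 : ℂ)⁻¹ * (2 : ℂ)⁻¹)
            * x i ((u * v - v * u) * bb i - bb i * (u * v - v * u)) := by
      intro u v
      have := h u v
      rw [hD] at this
      rw [this]
      refine Finset.sum_congr rfl fun i _ => ?_
      rw [← map_sub, jord_inner_aux, map_smul, smul_eq_mul]
    have hsum : x₀ ((a * b - b * a) + (c * d - d * c))
        = ∑ i, ((2 : ℂ)⁻¹ * (2 : ℂ)⁻¹) * x i ((1 : A) * bb i - bb i * (1 : A)) := by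
      rw [map_add, key a b, key c d, ← Finset.sum_add_distrib]
      refine Finset.sum_congr rfl fun i _ => ?_
      rw [← mul_add, ← map_add]
      congr 2
      rw [← habcd]
      noncomm_ring
    rw [habcd, hx₀1] at hsum
    simp at hsum
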